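/- With the notation above, for m ≥ n one has P(Ñ_n > 0, Ñ_m = 0) = f'(1 - θ(m-1)) - f'(1 - θ(n-1)) ≥ (θ(n-1) - θ(m-1)) · f''(1 - θ(n-1)). -/

import Mathlib

/-!
Absorption at `0` gives `{Ñ_n = 0} ⊆ {Ñ_m = 0}`, so the probability is the difference of the
two laws `f'(f_{m-1}(0)) - f'(f_{n-1}(0))`. Since `p` has mean `1`, some `p j` with `j ≥ 1` is
positive, so `f` maps `[0, 1)` into itself and the iterates `f_k(0)` increase inside `[0, 1)`.
On `(-1, 1)` the moment assumptions make the power series of `f` and `f'` differentiable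
termwise, and `f''`, having nonnegative coefficients, is monotone on `[0, 1)`; the mean value
theorem for `f'` on `[f_{n-1}(0), f_{m-1}(0)]` then gives the lower bound.
-/

open MeasureTheory Set Filter Topology

noncomputable def genFun (p : ℕ → ℝ) (s : ℝ) : ℝ := ∑' k, p k * s ^ k

def derivCoeff (p : ℕ → ℝ) (k : ℕ) : ℝ := (k + 1) * p (k + 1)

section Moments

variable {p : ℕ → ℝ}

lemma summable_pow_mul_norm_of_le {i j : ℕ} (hji : j ≤ i)
    (h : Summable fun k : ℕ => (k : ℝ) ^ i * ‖p k‖) :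
    Summable fun k : ℕ => (k : ℝ) ^ j * ‖p k‖ := by
  refine (summable_nat_add_iff 1).1 <| ((summable_nat_add_iff 1).2 h).of_nonneg_of_le
    (fun k => by positivity) fun k => ?_
  push_cast
  gcongr
  linarith

lemma summable_pow_mul_norm_derivCoeff {j : ℕ}
    (h : Summable fun k : ℕ => (k : ℝ) ^ (j + 1) * ‖p k‖) :
    Summable fun k : ℕ => (k : ℝ) ^ j * ‖derivCoeff p k‖ := by
  refine ((summable_nat_add_iff 1).2 h).of_nonneg_of_le (fun k => by positivity) fun k => ?_
  rw [derivCoeff, norm_mul, pow_succ]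
  push_cast
  rw [Real.norm_of_nonneg (by positivity), mul_assoc]
  gcongr
  linarith

lemma summable_natCast_mul_norm_of_pow {i : ℕ} (hi : 1 ≤ i)
    (h : Summable fun k : ℕ => (k : ℝ) ^ i * ‖p k‖) :
    Summable fun k : ℕ => (k : ℝ) * ‖p k‖ := by
  simpa using summable_pow_mul_norm_of_le hi h

end Moments

section GenFun

variable {p : ℕ → ℝ}

lemma hasDerivAt_genFun (h : Summable fun k : ℕ => (k : ℝ) * ‖p k‖) {x : ℝ}
    (hx : x ∈ Ioo (-1) 1) :
    HasDerivAt (genFun p) (genFun (derivCoeff p) x) x := by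
  have hbound : ∀ k, ∀ y ∈ Ioo (-1 : ℝ) 1,
      ‖p k * (k * y ^ (k - 1))‖ ≤ k * ‖p k‖ := by
    intro k y hy
    have hy1 : ‖y‖ ≤ 1 := abs_le.2 ⟨hy.1.le, hy.2.le⟩
    rw [norm_mul, norm_mul, norm_pow, Real.norm_natCast, mul_left_comm, ← mul_assoc]
    exact mul_le_of_le_one_right (by positivity) (pow_le_one₀ (norm_nonneg y) hy1)
  have hzero : Summable fun k => p k * (0 : ℝ) ^ k :=
    summable_of_ne_finset_zero (s := {0}) fun k hk => by simp_all
  have hderiv := hasDerivAt_tsum_of_isPreconnected h isOpen_Ioo isPreconnected_Ioo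
    (g := fun k y => p k * y ^ k) (g' := fun k y => p k * (k * y ^ (k - 1)))
    (fun k y _ => (hasDerivAt_pow k y).const_mul (p k)) hbound
    (by norm_num : (0 : ℝ) ∈ Ioo (-1) 1) hzero hx
  have hshift : genFun (derivCoeff p) x = ∑' k, p k * (k * x ^ (k - 1)) := by
    rw [(h.of_norm_bounded fun k => hbound k x hx).tsum_eq_zero_add]
    simp only [genFun, derivCoeff, Nat.cast_zero, zero_mul, mul_zero, zero_add, Nat.cast_succ,
      Nat.add_sub_cancel]
    exact tsum_congr fun k => by ring
  rw [hshift]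
  exact hderiv

lemma deriv_genFun (h : Summable fun k : ℕ => (k : ℝ) * ‖p k‖) {x : ℝ}
    (hx : x ∈ Ioo (-1) 1) :
    deriv (genFun p) x = genFun (derivCoeff p) x :=
  (hasDerivAt_genFun h hx).deriv

lemma iteratedDeriv_two_genFun (h : Summable fun k : ℕ => (k : ℝ) ^ 2 * ‖p k‖) {x : ℝ}
    (hx : x ∈ Ioo (-1) 1) :
    iteratedDeriv 2 (genFun p) x = genFun (derivCoeff (derivCoeff p)) x := by
  have h₁ := summable_natCast_mul_norm_of_pow (by norm_num) h
  have h₁' : Summable fun k : ℕ => (k : ℝ) * ‖derivCoeff p k‖ := by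
    simpa using summable_pow_mul_norm_derivCoeff (j := 1) h
  have hev : deriv (genFun p) =ᶠ[𝓝 x] genFun (derivCoeff p) :=
    eventually_of_mem (isOpen_Ioo.mem_nhds hx) fun y hy => deriv_genFun h₁ hy
  rw [iteratedDeriv_succ, iteratedDeriv_one, hev.deriv_eq, deriv_genFun h₁' hx]

variable (hp : ∀ k, 0 ≤ p k)
include hp

lemma derivCoeff_nonneg (k : ℕ) : 0 ≤ derivCoeff p k :=
  mul_nonneg (by positivity) (hp _)

lemma genFun_nonneg {x : ℝ} (hx : 0 ≤ x) : 0 ≤ genFun p x :=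
  tsum_nonneg fun k => mul_nonneg (hp k) (pow_nonneg hx k)

lemma summable_mul_pow (hS : Summable p) {x : ℝ} (hx : x ∈ Icc 0 1) :
    Summable fun k => p k * x ^ k :=
  hS.of_nonneg_of_le (fun k => mul_nonneg (hp k) (pow_nonneg hx.1 k))
    fun k => mul_le_of_le_one_right (hp k) (pow_le_one₀ hx.1 hx.2)

lemma monotoneOn_genFun (hS : Summable p) : MonotoneOn (genFun p) (Icc 0 1) :=
  fun _ hx _ hy hxy => (summable_mul_pow hp hS hx).tsum_le_tsum
    (fun k => mul_le_mul_of_nonneg_left (pow_le_pow_left₀ hx.1 hxy k) (hp k))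
    (summable_mul_pow hp hS hy)

lemma exists_ne_zero_pos_of_tsum_natCast_mul_ne_zero (h : ∑' k : ℕ, (k : ℝ) * p k ≠ 0) :
    ∃ j, j ≠ 0 ∧ 0 < p j := by
  by_contra! hle
  refine h ((tsum_congr fun k => ?_).trans tsum_zero)
  rcases eq_or_ne k 0 with rfl | hk
  · simp
  · rw [le_antisymm (hle k hk) (hp k), mul_zero]

lemma deriv_genFun_nonneg (h : Summable fun k : ℕ => (k : ℝ) * ‖p k‖) {x : ℝ}
    (hx : x ∈ Ico 0 1) : 0 ≤ deriv (genFun p) x := by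
  rw [deriv_genFun h ⟨by linarith [hx.1], hx.2⟩]
  exact genFun_nonneg (derivCoeff_nonneg hp) hx.1

lemma iteratedDeriv_two_genFun_nonneg (h : Summable fun k : ℕ => (k : ℝ) ^ 2 * ‖p k‖)
    {x : ℝ} (hx : x ∈ Ico 0 1) : 0 ≤ iteratedDeriv 2 (genFun p) x := by
  rw [iteratedDeriv_two_genFun h ⟨by linarith [hx.1], hx.2⟩]
  exact genFun_nonneg (derivCoeff_nonneg (derivCoeff_nonneg hp)) hx.1

lemma genFun_lt_one (hS : Summable p) (hsum : ∑' k, p k = 1) {j : ℕ} (hj : j ≠ 0)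
    (hpj : 0 < p j) {x : ℝ} (hx : x ∈ Ico 0 1) : genFun p x < 1 := by
  have hSx := summable_mul_pow hp hS (Ico_subset_Icc_self hx)
  have hgap : 0 < ∑' k, (p k - p k * x ^ k) :=
    (hS.sub hSx).tsum_pos
      (fun k => sub_nonneg.2 (mul_le_of_le_one_right (hp k) (pow_le_one₀ hx.1 hx.2.le))) j
      (sub_pos.2 (mul_lt_of_lt_one_right hpj (pow_lt_one₀ hx.1 hx.2 hj)))
  rw [hS.tsum_sub hSx, hsum] at hgap
  exact sub_pos.1 hgap

lemma mapsTo_genFun_Ico (hS : Summable p) (hsum : ∑' k, p k = 1) {j : ℕ} (hj : j ≠ 0)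
    (hpj : 0 < p j) : MapsTo (genFun p) (Ico 0 1) (Ico 0 1) :=
  fun _ hx => ⟨genFun_nonneg hp hx.1, genFun_lt_one hp hS hsum hj hpj hx⟩

lemma sub_mul_iteratedDeriv_two_genFun_le (h : Summable fun k : ℕ => (k : ℝ) ^ 2 * ‖p k‖)
    {a b : ℝ} (ha : 0 ≤ a) (hab : a ≤ b) (hb : b < 1) :
    (b - a) * iteratedDeriv 2 (genFun p) a ≤ deriv (genFun p) b - deriv (genFun p) a := by
  have h₁ := summable_natCast_mul_norm_of_pow (by norm_num) h
  have h₁' : Summable fun k : ℕ => (k : ℝ) * ‖derivCoeff p k‖ := by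
    simpa using summable_pow_mul_norm_derivCoeff (j := 1) h
  have hS'' : Summable (derivCoeff (derivCoeff p)) := by
    refine Summable.of_norm ?_
    simpa using summable_pow_mul_norm_derivCoeff (j := 0) (by simpa using h₁')
  have hI : Icc a b ⊆ Ioo (-1) 1 := Icc_subset_Ioo (by linarith) hb
  have hmono'' := monotoneOn_genFun (derivCoeff_nonneg (derivCoeff_nonneg hp)) hS''
  rw [iteratedDeriv_two_genFun h (hI ⟨le_rfl, hab⟩), deriv_genFun h₁ (hI ⟨le_rfl, hab⟩),
    deriv_genFun h₁ (hI ⟨hab, le_rfl⟩), mul_comm]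
  refine (convex_Icc a b).mul_sub_le_image_sub_of_le_deriv
    (fun y hy => (hasDerivAt_genFun h₁' (hI hy)).continuousAt.continuousWithinAt)
    (fun y hy => (hasDerivAt_genFun h₁' (hI (interior_subset hy))).differentiableAt
      |>.differentiableWithinAt)
    (fun y hy => ?_) a ⟨le_rfl, hab⟩ b ⟨hab, le_rfl⟩ hab
  rw [interior_Icc] at hy
  rw [deriv_genFun h₁' (hI (Ioo_subset_Icc_self hy))]
  exact hmono'' ⟨ha, by linarith⟩ ⟨by linarith [hy.1], by linarith [hy.2]⟩ hy.1.le

end GenFun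

lemma MonotoneOn.monotone_iterate_of_le_map {α : Type*} [Preorder α] {f : α → α} {s : Set α}
    (hf : MonotoneOn f s) (hs : MapsTo f s s) {x : α} (hx : x ∈ s) (hfx : x ≤ f x) :
    Monotone fun n => f^[n] x := by
  have hmono : Monotone (hs.restrict f s s) := fun u v huv => hf u.2 v.2 huv
  intro a b hab
  have := hmono.monotone_iterate_of_le_map (x := ⟨x, hx⟩) hfx hab
  dsimp only at this
  rwa [hs.iterate_restrict, hs.iterate_restrict] at this

lemma measure_ne_zero_and_eq_zero {Ω : Type*} [MeasurableSpace Ω] (μ : Measure Ω)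
    [IsFiniteMeasure μ] {X Y : Ω → ℕ} (hX : Measurable X)
    (hXY : ∀ ω, X ω = 0 → Y ω = 0) :
    μ {ω | X ω ≠ 0 ∧ Y ω = 0} = μ {ω | Y ω = 0} - μ {ω | X ω = 0} := by
  have hset : {ω | X ω ≠ 0 ∧ Y ω = 0} = {ω | Y ω = 0} \ {ω | X ω = 0} := by
    ext ω
    simp only [mem_ofPred_eq, Set.mem_sdiff]
    tauto
  rw [hset, measure_sdiff (show {ω | X ω = 0} ⊆ {ω | Y ω = 0} from fun ω => hXY ω)
    (hX (measurableSet_singleton 0)).nullMeasurableSet (measure_ne_top μ _)]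

/-- For `m ≥ n ≥ 1`, the branching process `Nt` with size-biased first generation
(with absorption at `0` and one-dimensional marginals `P(Nt_k = 0) = f'(f_{k-1}(0))`)
satisfies `P(Nt_n > 0, Nt_m = 0) = f'(1-θ(m-1)) - f'(1-θ(n-1))
≥ (θ(n-1) - θ(m-1)) f''(1-θ(n-1))`, where `θ(k) = 1 - f_k(0)`. -/
theorem stmt11 {Ω : Type*} [MeasurableSpace Ω] (μ : Measure Ω) [IsProbabilityMeasure μ]
    (p : ℕ → ℝ) (hp : ∀ k, 0 ≤ p k)
    (hsum : ∑' k : ℕ, p k = 1) (hmean : ∑' k : ℕ, (k : ℝ) * p k = 1)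
    (hthird : Summable fun k : ℕ => (k : ℝ) ^ 3 * p k)
    (f : ℝ → ℝ) (hf : ∀ s, f s = ∑' k : ℕ, p k * s ^ k)
    (θ : ℕ → ℝ) (hθ : ∀ k, θ k = 1 - f^[k] 0)
    (Nt : ℕ → Ω → ℕ) (hmeas : ∀ k, Measurable (Nt k))
    (habs : ∀ ω (k l : ℕ), k ≤ l → Nt k ω = 0 → Nt l ω = 0)
    (hlaw : ∀ k, 1 ≤ k → μ {ω | Nt k ω = 0} = ENNReal.ofReal (deriv f (f^[k - 1] 0)))
    (n m : ℕ) (hn : 1 ≤ n) (hm : n ≤ m) :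
    (μ {ω | Nt n ω ≠ 0 ∧ Nt m ω = 0}).toReal
        = deriv f (1 - θ (m - 1)) - deriv f (1 - θ (n - 1)) ∧
    (θ (n - 1) - θ (m - 1)) * iteratedDeriv 2 f (1 - θ (n - 1))
        ≤ deriv f (1 - θ (m - 1)) - deriv f (1 - θ (n - 1)) := by
  obtain rfl : f = genFun p := funext hf
  have hnorm : ∀ k, ‖p k‖ = p k := fun k => Real.norm_of_nonneg (hp k)
  have h₂ : Summable fun k : ℕ => (k : ℝ) ^ 2 * ‖p k‖ :=
    summable_pow_mul_norm_of_le (by norm_num : 2 ≤ 3) (by simpa only [hnorm] using hthird)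
  have hS : Summable p := by
    simpa only [pow_zero, one_mul, hnorm] using summable_pow_mul_norm_of_le (Nat.zero_le 2) h₂
  obtain ⟨j, hj, hpj⟩ := exists_ne_zero_pos_of_tsum_natCast_mul_ne_zero hp (by simp [hmean])
  have hmaps := mapsTo_genFun_Ico hp hS hsum hj hpj
  have h0 : (0 : ℝ) ∈ Ico 0 1 := ⟨le_rfl, one_pos⟩
  have hmono : Monotone fun k => (genFun p)^[k] 0 :=
    ((monotoneOn_genFun hp hS).mono Ico_subset_Icc_self).monotone_iterate_of_le_map hmaps h0
      (genFun_nonneg hp le_rfl)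
  obtain ⟨ha₀, ha₁⟩ := hmaps.iterate (n - 1) h0
  obtain ⟨-, hb₁⟩ := hmaps.iterate (m - 1) h0
  simp only [hθ, sub_sub_cancel, sub_sub_sub_cancel_left]
  have hab := hmono (Nat.sub_le_sub_right hm 1)
  have hineq := sub_mul_iteratedDeriv_two_genFun_le hp h₂ ha₀ hab hb₁
  refine ⟨?_, hineq⟩
  have hf'a :=
    deriv_genFun_nonneg hp (summable_natCast_mul_norm_of_pow (by norm_num) h₂) ⟨ha₀, ha₁⟩
  have hf''a := iteratedDeriv_two_genFun_nonneg hp h₂ ⟨ha₀, ha₁⟩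
  rw [measure_ne_zero_and_eq_zero μ (hmeas n) (fun ω => habs ω n m hm), hlaw n hn,
    hlaw m (hn.trans hm), ← ENNReal.ofReal_sub _ hf'a, ENNReal.toReal_ofReal]
  exact (mul_nonneg (sub_nonneg.2 hab) hf''a).trans hineq
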